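/- Let g : ℝ₊ → ℝ be measurable such that the restriction of λ_{ℝ₊} g^{−1} to ℝ∖{0} is absolutely continuous with respect to Lebesgue measure. Let (Tᵢ) be Poisson jump times and (Δᵢ) i.i.d. real random variables with law σ without atom at 0, independent of (Tᵢ), such that the series I = Σ_{i≥1} Δᵢ g(Tᵢ) converges a.s. Then the restriction of the law of I to ℝ∖{0} is absolutely continuous with respect to Lebesgue measure. -/

import Mathlib

/-
Fix a Lebesgue-null set `A` with `0 ∉ A`. If `I ∈ A`, some term `Δₙ g(Tₙ₊₁)` is non-zero, and
`I = Sₙ + Δₙ g(Tₙ + Eₙ) + Rₙ`, where the partial sum `Sₙ` and `Tₙ` only involve the variables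
before `Eₙ`, and the remainder `Rₙ` involves `Eₙ, Eₙ₊₁` only through `Tₙ₊₂ = Tₙ + (Eₙ + Eₙ₊₁)`.
Since `Eₙ` and `Eₙ₊₁` have densities and are independent of each other and of everything else, the
pair `(Eₙ, Eₙ + Eₙ₊₁)` has a density on `ℝ²` and is independent of the remaining data. Freezing
`Eₙ + Eₙ₊₁` and the remaining data, the values `x` of `Eₙ` that put `I` into `A` form a translate
of `{u > 0 | c + d g(u) ∈ A, d g(u) ≠ 0}`, which is null by the hypothesis on `λ g⁻¹`; by Fubini
each of these events is null, and so is their countable union.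
-/

open MeasureTheory ProbabilityTheory Filter
open scoped ENNReal

/-- Jump times of a Poisson process: partial sums of the interarrival times `E`. -/
noncomputable def jumpTime {Ω : Type*} (E : ℕ → Ω → ℝ) (i : ℕ) (ω : Ω) : ℝ :=
  ∑ j ∈ Finset.range i, E j ω

open Set Topology

section Independence

variable {Ω ι : Type*}

lemma measurable_biSup_comap_of_mem {β : ι → Type*} [mβ : ∀ i, MeasurableSpace (β i)]
    (F : ∀ i, Ω → β i) {S : Set ι} {i : ι} (hi : i ∈ S) :
    Measurable[⨆ i ∈ S, (mβ i).comap (F i)] (F i) :=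
  measurable_iff_comap_le.2 (le_biSup (fun i => (mβ i).comap (F i)) hi)

variable [MeasurableSpace Ω] {P : Measure Ω}

lemma ProbabilityTheory.iIndepFun.indepFun_of_measurable_biSup {β : ι → Type*}
    [mβ : ∀ i, MeasurableSpace (β i)] {F : ∀ i, Ω → β i} (h : iIndepFun F P)
    (hF : ∀ i, Measurable (F i)) {S T : Set ι} (hST : Disjoint S T) {γ δ : Type*}
    [MeasurableSpace γ] [MeasurableSpace δ]
    {f : Ω → γ} {g : Ω → δ} (hf : Measurable[⨆ i ∈ S, (mβ i).comap (F i)] f)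
    (hg : Measurable[⨆ i ∈ T, (mβ i).comap (F i)] g) : IndepFun f g P := by
  have hindep := indep_iSup_of_disjoint (fun i => (hF i).comap_le)
    ((iIndepFun_iff_iIndep _ _ _).1 h) hST
  exact (IndepFun_iff_Indep _ _ _).2 (indep_of_indep_of_le hindep hf.comap_le hg.comap_le)

variable [IsProbabilityMeasure P] {β : Type*} [MeasurableSpace β]

lemma ProbabilityTheory.IndepFun.iIndepFun_fin_two {X Y : Ω → β} (h : IndepFun X Y P)
    (hX : Measurable X) (hY : Measurable Y) : iIndepFun ![X, Y] P := by
  have hXY : ∀ k, Measurable (![X, Y] k) := Fin.forall_fin_two.2 ⟨hX, hY⟩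
  rw [iIndepFun_iff_map_fun_eq_pi_map fun k => (hXY k).aemeasurable]
  apply MeasurableEquiv.finTwoArrow.map_measurableEquiv_injective
  have hpi : (fun k => P.map (![X, Y] k)) = ![P.map X, P.map Y] := by
    ext1 k; fin_cases k <;> rfl
  rw [hpi, (measurePreserving_finTwoArrow_vec _ _).map_eq, Measure.map_map (by fun_prop)
    (measurable_pi_lambda _ hXY)]
  exact (indepFun_iff_map_prod_eq_prod_map_map hX.aemeasurable hY.aemeasurable).1 h

lemma ProbabilityTheory.iIndepFun.sumElim_of_indepFun {X Y : ι → Ω → β}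
    (hX : ∀ i, Measurable (X i)) (hY : ∀ i, Measurable (Y i))
    (h : iIndepFun (fun i ω => (X i ω, Y i ω)) P) (hXY : ∀ i, IndepFun (X i) (Y i) P) :
    iIndepFun (Sum.elim X Y) P := by
  have hpairs : iIndepFun (fun i ω => (![X i, Y i] · ω)) P := by
    convert h.comp (fun _ => MeasurableEquiv.finTwoArrow.symm) (fun _ => by fun_prop) using 1
    ext i ω k; fin_cases k <;> rfl
  have hall := iIndepFun_uncurry' (X := fun i => ![X i, Y i])
    (fun i => Fin.forall_fin_two.2 ⟨hX i, hY i⟩) hpairs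
    (fun i => (hXY i).iIndepFun_fin_two (hX i) (hY i))
  have hinj : Function.Injective (Sum.elim (fun i : ι => (i, (0 : Fin 2))) (fun i => (i, 1))) := by
    rintro (i | i) (j | j) <;> simp
  convert hall.precomp hinj using 1
  ext (i | i) ω <;> rfl

end Independence

lemma MeasureTheory.Measure.prod_apply_eq_zero_of_section {α β γ : Type*} [MeasurableSpace α]
    [MeasurableSpace β] [MeasurableSpace γ] {μ : Measure α} {ν : Measure β} [SFinite μ] [SFinite ν]
    {κ : Measure (α × β)} [SFinite κ] (hκ : κ ≪ μ.prod ν) (η : Measure γ) [SFinite η]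
    {V : Set ((α × β) × γ)} (hV : MeasurableSet V) (hsec : ∀ s z, μ {x | ((x, s), z) ∈ V} = 0) :
    κ.prod η V = 0 := by
  rw [Measure.prod_apply_symm hV]
  have hnull : ∀ z, κ ((fun p => (p, z)) ⁻¹' V) = 0 := fun z => hκ <| by
    rw [Measure.prod_apply_symm (measurable_prodMk_right hV)]
    exact (lintegral_congr fun s => hsec s z).trans lintegral_zero
  simp [hnull]

section Shear

variable {G : Type*} [AddGroup G] [MeasurableSpace G] [MeasurableAdd₂ G]
  {ρ : Measure G} [SFinite ρ] [ρ.IsAddLeftInvariant]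

lemma MeasureTheory.Measure.AbsolutelyContinuous.map_prod_shear {μ ν : Measure G} (hμ : μ ≪ ρ)
    (hν : ν ≪ ρ) : (μ.prod ν).map (fun z => (z.1, z.1 + z.2)) ≪ ρ.prod ρ := by
  simpa only [(measurePreserving_prod_add ρ ρ).map_eq] using (hμ.prod hν).map
    (by fun_prop : Measurable fun z : G × G => (z.1, z.1 + z.2))

lemma measure_shear_preimage_eq_zero {Ω γ : Type*} [MeasurableSpace Ω] [MeasurableSpace γ]
    {P : Measure Ω} [IsFiniteMeasure P] {X Y : Ω → G} {Z : Ω → γ}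
    (hX : Measurable X) (hY : Measurable Y) (hZ : Measurable Z) (hXY : IndepFun X Y P)
    (hXYZ : IndepFun (fun ω => (X ω, Y ω)) Z P) (hXρ : P.map X ≪ ρ) (hYρ : P.map Y ≪ ρ)
    {V : Set ((G × G) × γ)} (hV : MeasurableSet V) (hsec : ∀ s z, ρ {x | ((x, s), z) ∈ V} = 0) :
    P ((fun ω => ((X ω, X ω + Y ω), Z ω)) ⁻¹' V) = 0 := by
  have hshear : Measurable fun z : G × G => (z.1, z.1 + z.2) := by fun_prop
  have hlaw : P.map (fun ω => (X ω, X ω + Y ω)) = ((P.map X).prod (P.map Y)).map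
      (fun z => (z.1, z.1 + z.2)) := by
    rw [← (indepFun_iff_map_prod_eq_prod_map_map hX.aemeasurable hY.aemeasurable).1 hXY,
      Measure.map_map hshear (hX.prodMk hY)]
    rfl
  have hindep : IndepFun (fun ω => (X ω, X ω + Y ω)) Z P := hXYZ.comp hshear measurable_id
  rw [← Measure.map_apply (by fun_prop) hV, (indepFun_iff_map_prod_eq_prod_map_map
    (by fun_prop) hZ.aemeasurable).1 hindep]
  exact Measure.prod_apply_eq_zero_of_section (hlaw ▸ hXρ.map_prod_shear hYρ) _ hV hsec

end Shear

lemma ae_pos_expMeasure (r : ℝ) : ∀ᵐ x ∂expMeasure r, 0 < x := by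
  simp only [ae_iff, not_lt]
  change expMeasure r (Iic 0) = 0
  rw [expMeasure, gammaMeasure, withDensity_apply _ measurableSet_Iic,
    ← setLIntegral_congr Iio_ae_eq_Iic]
  exact lintegral_gammaPDF_of_nonpos le_rfl

lemma volume_setOf_affine_comp_mem_eq_zero {g : ℝ → ℝ} (hg : Measurable g)
    (hgac : (((volume.restrict (Ioi (0 : ℝ))).map g).restrict ({0}ᶜ : Set ℝ)) ≪ volume)
    {A : Set ℝ} (hA : volume A = 0) (c d : ℝ) :
    volume {u | 0 < u ∧ d * g u ≠ 0 ∧ c + d * g u ∈ A} = 0 := by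
  rcases eq_or_ne d 0 with rfl | hd
  · simp
  set B := (fun v => c + d * v) ⁻¹' A
  have hB : volume B = 0 := by
    change volume ((fun v => d * v) ⁻¹' ((fun v => c + v) ⁻¹' A)) = 0
    rw [Real.volume_preimage_mul_left hd, measure_preimage_add, hA, mul_zero]
  have hgB := hgac hB
  rw [Measure.restrict_apply' (measurableSet_singleton 0).compl] at hgB
  refine measure_mono_null (t := g ⁻¹' (B ∩ {0}ᶜ) ∩ Ioi 0) ?_ ?_
  · rintro u ⟨hu, hne, hmem⟩
    exact ⟨⟨hmem, right_ne_zero_of_mul hne⟩, hu⟩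
  · rw [← Measure.restrict_apply' measurableSet_Ioi]
    exact nonpos_iff_eq_zero.1 ((Measure.le_map_apply hg.aemeasurable _).trans hgB.le)

/-- The value of the series `∑ₖ w.2 k * g (t + w.1 0 + ⋯ + w.1 (k - 1))`, and junk (`0`) when
its partial sums do not converge. -/
noncomputable def shotNoiseSeries (g : ℝ → ℝ) (t : ℝ) (w : (ℕ → ℝ) × (ℕ → ℝ)) : ℝ :=
  limUnder atTop fun m => ∑ k ∈ Finset.range m, w.2 k * g (t + ∑ j ∈ Finset.range k, w.1 j)

lemma measurable_shotNoiseSeries {g : ℝ → ℝ} (hg : Measurable g) :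
    Measurable fun p : ℝ × (ℕ → ℝ) × (ℕ → ℝ) => shotNoiseSeries g p.1 p.2 := by
  have hpartial : ∀ m, Measurable fun p : ℝ × (ℕ → ℝ) × (ℕ → ℝ) =>
      ∑ k ∈ Finset.range m, p.2.2 k * g (p.1 + ∑ j ∈ Finset.range k, p.2.1 j) := by
    intro m; fun_prop
  exact (StronglyMeasurable.limUnder fun m => (hpartial m).stronglyMeasurable).measurable

section ShotNoise

variable {Ω : Type*} (g : ℝ → ℝ) (E Δ : ℕ → Ω → ℝ)

noncomputable def shotNoisePartialSum (n : ℕ) (ω : Ω) : ℝ :=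
  ∑ i ∈ Finset.range n, Δ i ω * g (jumpTime E (i + 1) ω)

-- The terms after the `n`-th, written through `Tₙ₊₂` so that they depend on `E n` and `E (n + 1)`
-- only through their sum.
noncomputable def shotNoiseRemainder (n : ℕ) (ω : Ω) : ℝ :=
  shotNoiseSeries g (jumpTime E (n + 2) ω) (fun k => E (n + 2 + k) ω, fun k => Δ (n + 1 + k) ω)

lemma jumpTime_add (m k : ℕ) (ω : Ω) :
    jumpTime E (m + k) ω = jumpTime E m ω + ∑ j ∈ Finset.range k, E (m + j) ω :=
  Finset.sum_range_add _ _ _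

lemma jumpTime_succ (n : ℕ) (ω : Ω) : jumpTime E (n + 1) ω = jumpTime E n ω + E n ω :=
  Finset.sum_range_succ _ _

lemma shotNoisePartialSum_succ (n : ℕ) (ω : Ω) : shotNoisePartialSum g E Δ (n + 1) ω =
    shotNoisePartialSum g E Δ n ω + Δ n ω * g (jumpTime E (n + 1) ω) :=
  Finset.sum_range_succ _ _

-- Everything besides `E n` and `E n + E (n + 1)` on which the decomposition
-- `I = Sₙ + Δₙ g(Tₙ + Eₙ) + Rₙ` depends; it is independent of `(E n, E (n + 1))`.
noncomputable def shotNoiseData (n : ℕ) (ω : Ω) : ℝ × ℝ × ℝ × (ℕ → ℝ) × (ℕ → ℝ) :=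
  (jumpTime E n ω, shotNoisePartialSum g E Δ n ω, Δ n ω, fun k => E (n + 2 + k) ω,
    fun k => Δ (n + 1 + k) ω)

variable {g E Δ}

lemma shotNoisePartialSum_add_remainder {ω : Ω} {L : ℝ}
    (h : Tendsto (shotNoisePartialSum g E Δ · ω) atTop (𝓝 L)) (n : ℕ) :
    shotNoisePartialSum g E Δ (n + 1) ω + shotNoiseRemainder g E Δ n ω = L := by
  have hshift : ∀ m, ∑ k ∈ Finset.range m, Δ (n + 1 + k) ω *
      g (jumpTime E (n + 2) ω + ∑ j ∈ Finset.range k, E (n + 2 + j) ω) =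
      shotNoisePartialSum g E Δ (n + 1 + m) ω - shotNoisePartialSum g E Δ (n + 1) ω := by
    intro m
    simp only [shotNoisePartialSum, Finset.sum_range_add, add_sub_cancel_left]
    refine Finset.sum_congr rfl fun k _ => ?_
    rw [← jumpTime_add, show n + 1 + k + 1 = n + 2 + k by omega]
  have htail := (h.comp (tendsto_add_atTop_nat (n + 1))).sub_const
    (shotNoisePartialSum g E Δ (n + 1) ω)
  simp only [Function.comp_def, add_comm _ (n + 1), ← hshift] at htail
  rw [shotNoiseRemainder, shotNoiseSeries, htail.limUnder_eq, add_sub_cancel]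

lemma measurable_shotNoiseData {mΩ : MeasurableSpace Ω} (hg : Measurable g) {n : ℕ}
    (hE : ∀ j, j ≠ n → j ≠ n + 1 → Measurable (E j)) (hΔ : ∀ j, Measurable (Δ j)) :
    Measurable (shotNoiseData g E Δ n) := by
  have hT : ∀ i ≤ n, Measurable (jumpTime E i) := fun i hi =>
    Finset.measurable_sum _ fun j hj => by
      simp only [Finset.mem_range] at hj
      exact hE j (by omega) (by omega)
  refine (hT n le_rfl).prodMk (Measurable.prodMk ?_ ((hΔ n).prodMk (Measurable.prodMk ?_ ?_)))
  · exact Finset.measurable_sum _ fun i hi =>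
      (hΔ i).mul (hg.comp (hT (i + 1) (by simp at hi; omega)))
  · exact measurable_pi_lambda _ fun k => hE _ (by omega) (by omega)
  · exact measurable_pi_lambda _ fun k => hΔ _

end ShotNoise

section Probability

variable {Ω : Type*} [MeasurableSpace Ω] {P : Measure Ω} {g : ℝ → ℝ} {E Δ : ℕ → Ω → ℝ}

lemma indepFun_shotNoiseData (hg : Measurable g) (hE : ∀ j, Measurable (E j))
    (hΔ : ∀ j, Measurable (Δ j)) (hF : iIndepFun (Sum.elim E Δ) P) (n : ℕ) :
    IndepFun (fun ω => (E n ω, E (n + 1) ω)) (shotNoiseData g E Δ n) P := by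
  have hFm : ∀ i, Measurable (Sum.elim E Δ i) := fun | .inl j => hE j | .inr j => hΔ j
  have hZm : Measurable[⨆ i ∈ ({Sum.inl n, Sum.inl (n + 1)}ᶜ : Set (ℕ ⊕ ℕ)),
      MeasurableSpace.comap (Sum.elim E Δ i) inferInstance] (shotNoiseData g E Δ n) := by
    refine measurable_shotNoiseData hg (fun j h₁ h₂ => ?_) (fun j => ?_)
    · exact measurable_biSup_comap_of_mem (Sum.elim E Δ) (i := Sum.inl j) (by simp [h₁, h₂])
    · exact measurable_biSup_comap_of_mem (Sum.elim E Δ) (i := Sum.inr j) (by simp)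
  exact hF.indepFun_of_measurable_biSup hFm disjoint_compl_right
    ((measurable_biSup_comap_of_mem (Sum.elim E Δ) (i := Sum.inl n) (by simp)).prodMk
      (measurable_biSup_comap_of_mem (Sum.elim E Δ) (i := Sum.inl (n + 1)) (by simp))) hZm

variable [IsProbabilityMeasure P]

lemma measure_shotNoise_term_eq_zero (hg : Measurable g)
    (hgac : (((volume.restrict (Ioi (0 : ℝ))).map g).restrict ({0}ᶜ : Set ℝ)) ≪ volume)
    (hE : ∀ j, Measurable (E j)) (hΔ : ∀ j, Measurable (Δ j)) (hF : iIndepFun (Sum.elim E Δ) P)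
    (hEac : ∀ j, P.map (E j) ≪ volume) {A : Set ℝ} (hA : MeasurableSet A) (hA0 : volume A = 0)
    (n : ℕ) :
    P {ω | 0 < jumpTime E (n + 1) ω ∧ Δ n ω * g (jumpTime E (n + 1) ω) ≠ 0 ∧
      shotNoisePartialSum g E Δ (n + 1) ω + shotNoiseRemainder g E Δ n ω ∈ A} = 0 := by
  -- the coordinates `((x, s), (t, c, d, w))` stand for `((E n, E n + E (n + 1)), shotNoiseData)`
  set V : Set ((ℝ × ℝ) × ℝ × ℝ × ℝ × (ℕ → ℝ) × (ℕ → ℝ)) := {q | 0 < q.2.1 + q.1.1 ∧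
    q.2.2.2.1 * g (q.2.1 + q.1.1) ≠ 0 ∧
    (q.2.2.1 + shotNoiseSeries g (q.2.1 + q.1.2) q.2.2.2.2) + q.2.2.2.1 * g (q.2.1 + q.1.1) ∈ A}
  have hevent : {ω | 0 < jumpTime E (n + 1) ω ∧ Δ n ω * g (jumpTime E (n + 1) ω) ≠ 0 ∧
      shotNoisePartialSum g E Δ (n + 1) ω + shotNoiseRemainder g E Δ n ω ∈ A} =
      (fun ω => ((E n ω, E n ω + E (n + 1) ω), shotNoiseData g E Δ n ω)) ⁻¹' V := by
    ext ω
    simp only [mem_ofPred_eq, mem_preimage, V, shotNoiseData, shotNoiseRemainder,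
      shotNoisePartialSum_succ, show n + 2 = n + 1 + 1 from rfl, jumpTime_succ]
    rw [add_assoc (jumpTime E n ω), add_right_comm (shotNoisePartialSum g E Δ n ω)]
  have hV : MeasurableSet V := by
    have hS : Measurable fun q : (ℝ × ℝ) × ℝ × ℝ × ℝ × (ℕ → ℝ) × (ℕ → ℝ) =>
        shotNoiseSeries g (q.2.1 + q.1.2) q.2.2.2.2 :=
      (measurable_shotNoiseSeries hg).comp (f := fun q : (ℝ × ℝ) × ℝ × ℝ × ℝ × (ℕ → ℝ) × (ℕ → ℝ) =>
        (q.2.1 + q.1.2, q.2.2.2.2)) (by fun_prop)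
    have hgt : Measurable fun q : (ℝ × ℝ) × ℝ × ℝ × ℝ × (ℕ → ℝ) × (ℕ → ℝ) =>
        q.2.2.2.1 * g (q.2.1 + q.1.1) := by fun_prop
    have hsum : Measurable fun q : (ℝ × ℝ) × ℝ × ℝ × ℝ × (ℕ → ℝ) × (ℕ → ℝ) =>
        q.2.2.1 + shotNoiseSeries g (q.2.1 + q.1.2) q.2.2.2.2 + q.2.2.2.1 * g (q.2.1 + q.1.1) := by
      fun_prop
    exact (measurableSet_lt measurable_const (measurable_snd.fst.add measurable_fst.fst)).inter
      ((measurableSet_eq_fun hgt measurable_const).compl.inter (hsum hA))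
  rw [hevent]
  refine measure_shear_preimage_eq_zero (hE n) (hE (n + 1))
    (measurable_shotNoiseData hg (fun j _ _ => hE j) hΔ)
    (hF.indepFun (i := Sum.inl n) (j := Sum.inl (n + 1)) (by simp))
    (indepFun_shotNoiseData hg hE hΔ hF n) (hEac n) (hEac (n + 1)) hV fun s z => ?_
  exact (measure_preimage_add volume z.1 _).trans
    (volume_setOf_affine_comp_mem_eq_zero hg hgac hA0
      (z.2.1 + shotNoiseSeries g (z.1 + s) z.2.2.2) z.2.2.1)

lemma measure_preimage_shotNoise_eq_zero (hg : Measurable g)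
    (hgac : (((volume.restrict (Ioi (0 : ℝ))).map g).restrict ({0}ᶜ : Set ℝ)) ≪ volume)
    (hE : ∀ j, Measurable (E j)) (hΔ : ∀ j, Measurable (Δ j)) (hF : iIndepFun (Sum.elim E Δ) P)
    (hEac : ∀ j, P.map (E j) ≪ volume) (hEpos : ∀ᵐ ω ∂P, ∀ j, 0 < E j ω) {I : Ω → ℝ}
    (hconv : ∀ᵐ ω ∂P, Tendsto (shotNoisePartialSum g E Δ · ω) atTop (𝓝 (I ω)))
    {A : Set ℝ} (hA : MeasurableSet A) (hA0 : volume A = 0) (h0A : (0 : ℝ) ∉ A) :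
    P (I ⁻¹' A) = 0 := by
  refine measure_mono_null_ae ?_ (measure_iUnion_null fun n =>
    measure_shotNoise_term_eq_zero hg hgac hE hΔ hF hEac hA hA0 n)
  filter_upwards [hEpos, hconv] with ω hpos hI hIA
  obtain ⟨n, hn⟩ : ∃ n, Δ n ω * g (jumpTime E (n + 1) ω) ≠ 0 := by
    by_contra! h
    have hI0 : I ω = 0 := tendsto_nhds_unique hI (by simp [shotNoisePartialSum, h])
    exact h0A (hI0 ▸ hIA)
  have hT : 0 < jumpTime E (n + 1) ω := Finset.sum_pos (fun j _ => hpos j) (by simp)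
  exact mem_iUnion.2 ⟨n, hT, hn, (shotNoisePartialSum_add_remainder hI n).symm ▸ hIA⟩

end Probability

theorem shotNoise_linear_law_restrict_absolutelyContinuous_general {Ω : Type*} [MeasurableSpace Ω]
    (P : Measure Ω) [IsProbabilityMeasure P] (α : ℝ) (hα : 0 < α)
    (E : ℕ → Ω → ℝ) (Δ : ℕ → Ω → ℝ)
    (hE : ∀ j, Measurable (E j)) (hΔ : ∀ j, Measurable (Δ j))
    (σ : Measure ℝ) [IsProbabilityMeasure σ]
    (hindep : iIndepFun (fun j ω => (E j ω, Δ j ω)) P)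
    (hlaw : ∀ j, P.map (fun ω => (E j ω, Δ j ω)) = (expMeasure α).prod σ)
    (g : ℝ → ℝ) (hg : Measurable g)
    (hgac : (((volume.restrict (Set.Ioi (0 : ℝ))).map g).restrict ({0}ᶜ : Set ℝ))
        ≪ (volume : Measure ℝ))
    (I : Ω → ℝ) (hI : Measurable I)
    (hconv : ∀ᵐ ω ∂P,
      Tendsto (fun n => ∑ i ∈ Finset.range n, Δ i ω * g (jumpTime E (i + 1) ω))
        atTop (nhds (I ω))) :
    (P.map I).restrict ({0}ᶜ : Set ℝ) ≪ (volume : Measure ℝ) := by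
  have := isProbabilityMeasure_expMeasure hα
  have hlawE : ∀ j, P.map (E j) = expMeasure α := fun j => by
    rw [← Measure.fst_map_prodMk (hΔ j), hlaw j, Measure.fst_prod]
  have hlawΔ : ∀ j, P.map (Δ j) = σ := fun j => by
    rw [← Measure.snd_map_prodMk (hE j), hlaw j, Measure.snd_prod]
  have hF : iIndepFun (Sum.elim E Δ) P := hindep.sumElim_of_indepFun hE hΔ fun j =>
    (indepFun_iff_map_prod_eq_prod_map_map (hE j).aemeasurable (hΔ j).aemeasurable).2
      (by rw [hlaw j, hlawE j, hlawΔ j])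
  have hEac : ∀ j, P.map (E j) ≪ volume := fun j =>
    hlawE j ▸ withDensity_absolutelyContinuous _ _
  have hEpos : ∀ᵐ ω ∂P, ∀ j, 0 < E j ω := ae_all_iff.2 fun j =>
    ae_of_ae_map (hE j).aemeasurable ((hlawE j).symm ▸ ae_pos_expMeasure α)
  refine Measure.AbsolutelyContinuous.mk fun s hs hs0 => ?_
  have hA := hs.inter (measurableSet_singleton (0 : ℝ)).compl
  rw [Measure.restrict_apply hs, Measure.map_apply hI hA]
  exact measure_preimage_shotNoise_eq_zero hg hgac hE hΔ hF hEac hEpos hconv hA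
    (measure_mono_null inter_subset_left hs0) fun h => h.2 rfl

/-- If the restriction to `ℝ∖{0}` of the pushforward `λ_{ℝ₊} g⁻¹` is absolutely continuous
with respect to Lebesgue measure, then the restriction to `ℝ∖{0}` of the law of the shot
noise series `I = Σᵢ Δᵢ g(Tᵢ)` is absolutely continuous with respect to Lebesgue measure
(the law may have an atom at `0`). -/
theorem shotNoise_linear_law_restrict_absolutelyContinuous {Ω : Type*} [MeasurableSpace Ω]
    (P : Measure Ω) [IsProbabilityMeasure P] (α : ℝ) (hα : 0 < α)
    (E : ℕ → Ω → ℝ) (Δ : ℕ → Ω → ℝ)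
    (hE : ∀ j, Measurable (E j)) (hΔ : ∀ j, Measurable (Δ j))
    (σ : Measure ℝ) [IsProbabilityMeasure σ] (hσ0 : σ {0} = 0)
    (hindep : iIndepFun (fun j ω => (E j ω, Δ j ω)) P)
    (hlaw : ∀ j, P.map (fun ω => (E j ω, Δ j ω)) = (expMeasure α).prod σ)
    (g : ℝ → ℝ) (hg : Measurable g)
    (hgac : (((volume.restrict (Set.Ioi (0 : ℝ))).map g).restrict ({0}ᶜ : Set ℝ))
        ≪ (volume : Measure ℝ))
    (I : Ω → ℝ) (hI : Measurable I)
    (hconv : ∀ᵐ ω ∂P,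
      Tendsto (fun n => ∑ i ∈ Finset.range n, Δ i ω * g (jumpTime E (i + 1) ω))
        atTop (nhds (I ω))) :
    (P.map I).restrict ({0}ᶜ : Set ℝ) ≪ (volume : Measure ℝ) :=
  shotNoise_linear_law_restrict_absolutelyContinuous_general P α hα E Δ hE hΔ σ hindep hlaw g hg
    hgac I hI hconv
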